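/- For the k-dimensional Lyness map F with parameter a ≥ 0, the function V_2(x) = (a + Σ_{i=1}^k x_i + x_1 x_k)·(Π_{i=1}^{k-1}(1 + x_i + x_{i+1}))/(x_1···x_k) is a first integral of F on the positive orthant: V_2(F(x)) = V_2(x). -/

import Mathlib

/-!
Put `z = (a + x₂ + ⋯ + xₖ) / x₁`, the last coordinate of `F x`. The relation
`a + x₂ + ⋯ + xₖ = x₁ z` turns the first factor of `V₂ x` into `x₁ (1 + xₖ + z)` and that of
`V₂ (F x)` into `z (1 + x₁ + x₂)`. The chain products of `x` and `F x` share all factors but the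
first factor `1 + x₁ + x₂` of the former and the last factor `1 + xₖ + z` of the latter, so after
cancelling `x₁` and `z` against the denominators both values equal
`(1 + x₁ + x₂)(1 + xₖ + z) ∏_{i=2}^{k-1} (1 + xᵢ + xᵢ₊₁) / (x₂ ⋯ xₖ)`.
-/

open Finset

def chainProd {m : ℕ} (x : Fin (m + 1) → ℝ) : ℝ :=
  ∏ i : Fin m, (1 + x i.castSucc + x i.succ)

lemma chainProd_cons {m : ℕ} (x₀ : ℝ) (y : Fin (m + 1) → ℝ) :
    chainProd (Fin.cons x₀ y : Fin (m + 2) → ℝ) = (1 + x₀ + y 0) * chainProd y := by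
  simp [chainProd, Fin.prod_univ_succ]

lemma chainProd_snoc {m : ℕ} (y : Fin (m + 1) → ℝ) (z : ℝ) :
    chainProd (Fin.snoc y z : Fin (m + 2) → ℝ) = chainProd y * (1 + y (Fin.last m) + z) := by
  simp [chainProd, Fin.prod_univ_castSucc, ← Fin.castSucc_succ]

noncomputable def lynessV2 (a : ℝ) {m : ℕ} (x : Fin (m + 1) → ℝ) : ℝ :=
  (a + ∑ i, x i + x 0 * x (Fin.last m)) * chainProd x / ∏ i, x i

noncomputable def lynessMap (a : ℝ) {m : ℕ} (x : Fin (m + 1) → ℝ) : Fin (m + 1) → ℝ :=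
  Fin.snoc (Fin.tail x) ((a + ∑ i, Fin.tail x i) / x 0)

lemma lynessV2_snoc_eq_cons {a x₀ : ℝ} {m : ℕ} (y : Fin (m + 1) → ℝ) (hx₀ : x₀ ≠ 0)
    (hy : a + ∑ i, y i ≠ 0) :
    lynessV2 a (Fin.snoc y ((a + ∑ i, y i) / x₀) : Fin (m + 2) → ℝ) =
      lynessV2 a (Fin.cons x₀ y) := by
  set z := (a + ∑ i, y i) / x₀
  have hz : z ≠ 0 := div_ne_zero hy hx₀
  have hxz : a + ∑ i, y i = x₀ * z := (mul_div_cancel₀ _ hx₀).symm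
  have hsnoc : a + (∑ i, y i + z) + y 0 * z = z * (1 + x₀ + y 0) := by linear_combination hxz
  have hcons : a + (x₀ + ∑ i, y i) + x₀ * y (Fin.last m) = x₀ * (1 + y (Fin.last m) + z) := by
    linear_combination hxz
  have hy₀ : (Fin.snoc y z : Fin (m + 2) → ℝ) 0 = y 0 := Fin.snoc_castSucc (i := 0) ..
  rw [lynessV2, lynessV2, Fin.sum_snoc, Fin.sum_cons, Fin.prod_snoc, Fin.prod_cons, chainProd_snoc,
    chainProd_cons, Fin.snoc_last, Fin.cons_zero, Fin.cons_last, hy₀, hsnoc, hcons, mul_comm _ z,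
    mul_assoc z, mul_div_mul_left _ _ hz, mul_assoc x₀, mul_div_mul_left _ _ hx₀]
  ring

lemma lynessV2_lynessMap {a : ℝ} {m : ℕ} (x : Fin (m + 2) → ℝ) (hx₀ : x 0 ≠ 0)
    (hs : a + ∑ i, Fin.tail x i ≠ 0) : lynessV2 a (lynessMap a x) = lynessV2 a x := by
  induction x using Fin.consCases with
  | cons x₀ y =>
    rw [Fin.cons_zero] at hx₀
    rw [Fin.tail_cons] at hs
    rw [lynessMap, Fin.tail_cons, Fin.cons_zero]
    exact lynessV2_snoc_eq_cons y hx₀ hs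

lemma lynessMap_apply (a : ℝ) {m : ℕ} (x : Fin (m + 2) → ℝ) (i : Fin (m + 2)) :
    lynessMap a x i =
      if h : (i : ℕ) + 1 < m + 2 then x ⟨i + 1, h⟩ else (a + ∑ j, x j - x 0) / x 0 := by
  induction i using Fin.lastCases with
  | last =>
    rw [lynessMap, Fin.snoc_last, dif_neg (by simp), Fin.sum_univ_succ x, add_left_comm,
      add_sub_cancel_left]
    rfl
  | cast j => rw [lynessMap, Fin.snoc_castSucc, dif_pos (by simpa using j.is_lt)]; rfl

/-- `V₂` is a first integral of the `k`-dimensional Lyness map. -/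
theorem lyness_V2_first_integral (k : ℕ) (hk : 2 ≤ k) (a : ℝ) (ha : 0 ≤ a)
    (F : (Fin k → ℝ) → (Fin k → ℝ))
    (hF : ∀ x : Fin k → ℝ, ∀ i : Fin k,
      F x i = if h : (i : ℕ) + 1 < k then x ⟨(i : ℕ) + 1, h⟩
              else (a + (∑ j, x j) - x ⟨0, by omega⟩) / x ⟨0, by omega⟩)
    (V2 : (Fin k → ℝ) → ℝ)
    (hV2 : ∀ x : Fin k → ℝ, V2 x =
      (a + (∑ j, x j) + x ⟨0, by omega⟩ * x ⟨k - 1, by omega⟩) *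
        (∏ i : Fin (k - 1), (1 + x ⟨(i : ℕ), by have := i.isLt; omega⟩
          + x ⟨(i : ℕ) + 1, by have := i.isLt; omega⟩)) / ∏ j, x j)
    (x : Fin k → ℝ) (hx : ∀ i, 0 < x i) :
    V2 (F x) = V2 x := by
  obtain ⟨m, rfl⟩ : ∃ m, k = m + 2 := ⟨k - 2, by omega⟩
  have hFx : F x = lynessMap a x := funext fun i => by rw [hF, lynessMap_apply]; rfl
  -- `Fin (m + 2 - 1)` is `Fin (m + 1)` definitionally, so `hV2` is `lynessV2` unfolded.
  have hV : ∀ y, V2 y = lynessV2 a y := fun y => by rw [hV2]; rfl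
  have hs : 0 < a + ∑ i, Fin.tail x i :=
    add_pos_of_nonneg_of_pos ha (sum_pos (fun i _ => hx _) univ_nonempty)
  rw [hFx, hV, hV, lynessV2_lynessMap x (hx 0).ne' hs.ne']
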